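/- Let G be a finite simple graph, k a positive integer, S ⊆ V(G), and let 𝒞 be the family of all inclusion-wise maximal chips. Then any chip C ∈ 𝒞 touches at most 3k · 4^{3k} other chips of 𝒞. -/

import Mathlib

open SimpleGraph

variable {V : Type*}

/-- The open neighbourhood `N_G(C)` of a vertex set `C`:
vertices outside `C` with a neighbour in `C`. -/
def setNbhd (G : SimpleGraph V) (C : Set V) : Set V :=
  {v | v ∉ C ∧ ∃ u ∈ C, G.Adj u v}

/-- The closed neighbourhood `N_G[C] = C ∪ N_G(C)`. -/
def closedNbhd (G : SimpleGraph V) (C : Set V) : Set V :=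
  C ∪ setNbhd G C

/-- `W` is `(q,k)`-unbreakable in the induced subgraph `G[U]`:
every separation `(A,B)` of `G[U]` of order at most `k` has
`|(A∖B) ∩ W| ≤ q` or `|(B∖A) ∩ W| ≤ q`. -/
def UnbreakableIn (G : SimpleGraph V) (U W : Set V) (q k : ℕ) : Prop :=
  ∀ A B : Set V, A ∪ B = U →
    (∀ a ∈ A \ B, ∀ b ∈ B \ A, ¬ G.Adj a b) →
    (A ∩ B).ncard ≤ k →
    ((A \ B) ∩ W).ncard ≤ q ∨ ((B \ A) ∩ W).ncard ≤ q

/-- `W` is `(q,k)`-unbreakable in `G`. -/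
def Unbreakable (G : SimpleGraph V) (W : Set V) (q k : ℕ) : Prop :=
  UnbreakableIn G Set.univ W q k

/-- `x` and `y` lie in the same connected component of `G − W`. -/
def ReachAvoid (G : SimpleGraph V) (W : Set V) (x y : V) : Prop :=
  ∃ (hx : x ∈ Wᶜ) (hy : y ∈ Wᶜ), (G.induce Wᶜ).Reachable ⟨x, hx⟩ ⟨y, hy⟩

/-- `W` is an `X–Y` separator: no connected component of `G − W` contains
a vertex of `X∖W` and a vertex of `Y∖W`. -/
def IsSeparator (G : SimpleGraph V) (X Y W : Set V) : Prop :=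
  ∀ x ∈ X \ W, ∀ y ∈ Y \ W, ¬ ReachAvoid G W x y

/-- `R_{G−W}(X∖W)`: the set of vertices reachable from `X∖W` in `G − W`. -/
def reachSet (G : SimpleGraph V) (W X : Set V) : Set V :=
  {y | ∃ x ∈ X \ W, ReachAvoid G W x y}

/-- `W` is an important `X–Y` separator. -/
def IsImportantSeparator (G : SimpleGraph V) (X Y W : Set V) : Prop :=
  IsSeparator G X Y W ∧
  (∀ W' ⊆ W, IsSeparator G X Y W' → W' = W) ∧
  ∀ W' : Set V, IsSeparator G X Y W' → W'.ncard ≤ W.ncard →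
    ¬ reachSet G W X ⊂ reachSet G W' X

/-- A chip (w.r.t. `G`, `k` and `S`): `G[C]` is connected, `|N_G(C)| ≤ 3k`,
and `N_G(C)` is an important `C–S` separator. -/
def IsChip (G : SimpleGraph V) (k : ℕ) (S C : Set V) : Prop :=
  (G.induce C).Connected ∧ (setNbhd G C).ncard ≤ 3 * k ∧
  IsImportantSeparator G C S (setNbhd G C)

/-- The family of all inclusion-wise maximal chips. -/
def maximalChips (G : SimpleGraph V) (k : ℕ) (S : Set V) : Set (Set V) :=
  {C | IsChip G k S C ∧ ∀ C', IsChip G k S C' → C ⊆ C' → C' = C}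

/-- Two vertex sets touch: they intersect or some edge joins them. -/
def Touches (G : SimpleGraph V) (C₁ C₂ : Set V) : Prop :=
  (C₁ ∩ C₂).Nonempty ∨ ∃ u ∈ C₁, ∃ v ∈ C₂, G.Adj u v

/-- `D` is a connected component of `G − A`: a maximal set disjoint from `A`
inducing a connected subgraph. -/
def IsCompOf (G : SimpleGraph V) (A D : Set V) : Prop :=
  D ⊆ Aᶜ ∧ (G.induce D).Connected ∧
  ∀ D', D ⊆ D' → D' ⊆ Aᶜ → (G.induce D').Connected → D' = D

/-- The set `A = (⋂_{C ∈ 𝒞} V(G) ∖ N[C]) ∪ ⋃_{C ∈ 𝒞} N(C)` built from the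
maximal chips (equals `V(G)` when there are no chips). -/
def chipBag (G : SimpleGraph V) (k : ℕ) (S : Set V) : Set V :=
  (⋂ C ∈ maximalChips G k S, (closedNbhd G C)ᶜ) ∪
    ⋃ C ∈ maximalChips G k S, setNbhd G C

/-- `η(k) = 3k·(3k·4^{3k}+1)`. -/
def etaB (k : ℕ) : ℕ := 3 * k * (3 * k * 4 ^ (3 * k) + 1)

/-- `τ(k) = (3k)²·8^{3k} + 2k`. -/
def tauB (k : ℕ) : ℕ := (3 * k) ^ 2 * 8 ^ (3 * k) + 2 * k

/-- `τ′(k) = τ + (C(τ+k,2)·k + k)·k·η`. -/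
def tauB' (k : ℕ) : ℕ :=
  tauB k + ((tauB k + k).choose 2 * k + k) * k * etaB k

/-- The tree graph determined by a parent function. -/
def parentGraph {T : Type*} (parent : T → T) : SimpleGraph T where
  Adj t s := t ≠ s ∧ (parent t = s ∨ parent s = t)
  symm := by constructor; intro t s h; exact ⟨h.1.symm, h.2.symm⟩
  loopless := by constructor; intro t h; exact h.1 rfl

/-- The descendants of `t` (including `t` itself). -/
def descSet {T : Type*} (parent : T → T) (t : T) : Set T :=
  {u | ∃ n : ℕ, parent^[n] u = t}

/-- `γ(t) = ⋃_{u ⪯ t} β(u)`. -/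
def gammaSet {T : Type*} (parent : T → T) (β : T → Set V) (t : T) : Set V :=
  ⋃ u ∈ descSet parent t, β u

/-- `σ(t) = ∅` for the root, `β(t) ∩ β(parent t)` otherwise. -/
def sigmaSet {T : Type*} [DecidableEq T] (root : T) (parent : T → T)
    (β : T → Set V) (t : T) : Set V :=
  if t = root then ∅ else β t ∩ β (parent t)

/-- `(T,β)` (a rooted tree given by `root` and `parent`, with bags `β`)
is a tree decomposition of `G`. -/
structure IsTreeDecomp (G : SimpleGraph V) {T : Type*} (root : T) (parent : T → T)
    (β : T → Set V) : Prop where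
  parent_root : parent root = root
  reaches_root : ∀ t : T, ∃ n : ℕ, parent^[n] t = root
  bags_connected : ∀ v : V, ((parentGraph parent).induce {t | v ∈ β t}).Connected
  edge_in_bag : ∀ u v : V, G.Adj u v → ∃ t : T, u ∈ β t ∧ v ∈ β t

/-!
A maximal chip `C' ≠ C` touching `C` is connected and not contained in `C`, so it contains a
vertex of `N(C)`; hence it suffices to show that at most `4^{3k}` chips contain a given vertex `v`.
A chip containing `v` is the reach set of an important `{v}–S` separator of size at most `3k`,
and there are at most `4^p` of those for size `p`. For the latter take the furthest minimum
cut `R₀` and a vertex `v ∈ N(R₀)`: every important set contains `R₀`, so either `v` lies on its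
boundary (delete `v`; `p` drops by one) or inside it (add `R₀ ∪ {v}` to the sources; the minimum
cut grows by one). Either way `2p - λ` drops, which gives the bound `2^{2p - λ}`.
-/

open Relation

section Reach

variable {G G' : SimpleGraph V} {R R' X X' A : Set V} {u v : V}

/-- `R_{G[R]}(X ∩ R)`. -/
def reachIn (G : SimpleGraph V) (R X : Set V) : Set V :=
  {y | ∃ x ∈ X ∩ R, ReflTransGen (fun a b => G.Adj a b ∧ a ∈ R ∧ b ∈ R) x y}

lemma reachIn_subset : reachIn G R X ⊆ R := by
  rintro y ⟨x, ⟨-, hx⟩, h⟩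
  rcases h.cases_tail with rfl | ⟨_, -, -, -, hy⟩
  exacts [hx, hy]

lemma inter_subset_reachIn : X ∩ R ⊆ reachIn G R X := fun x hx => ⟨x, hx, .refl⟩

lemma subset_reachIn (h : X ⊆ R) : X ⊆ reachIn G R X :=
  fun _ hx => inter_subset_reachIn ⟨hx, h hx⟩

lemma reachIn_mono (hR : R ⊆ R') (hX : X ⊆ X') : reachIn G R X ⊆ reachIn G R' X' := by
  rintro y ⟨x, ⟨hxX, hxR⟩, h⟩
  exact ⟨x, ⟨hX hxX, hR hxR⟩,
    ReflTransGen.mono (fun a b ⟨hab, ha, hb⟩ => ⟨hab, hR ha, hR hb⟩) _ _ h⟩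

lemma reachIn_congr (h : ∀ a ∈ R, ∀ b ∈ R, G.Adj a b ↔ G'.Adj a b) :
    reachIn G R X = reachIn G' R X := by
  ext y
  constructor <;> rintro ⟨x, hx, hxy⟩
  · exact ⟨x, hx,
      ReflTransGen.mono (fun a b ⟨hab, ha, hb⟩ => ⟨(h a ha b hb).1 hab, ha, hb⟩) _ _ hxy⟩
  · exact ⟨x, hx,
      ReflTransGen.mono (fun a b ⟨hab, ha, hb⟩ => ⟨(h a ha b hb).2 hab, ha, hb⟩) _ _ hxy⟩

lemma mem_reachIn_of_adj (hu : u ∈ reachIn G R X) (huv : G.Adj u v) (hv : v ∈ R) :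
    v ∈ reachIn G R X := by
  obtain ⟨x, hx, h⟩ := hu
  exact ⟨x, hx, h.tail ⟨huv, reachIn_subset ⟨x, hx, h⟩, hv⟩⟩

lemma reachIn_subset_of_disjoint_setNbhd (hX : X ∩ R ⊆ A) (hA : Disjoint (setNbhd G A) R) :
    reachIn G R X ⊆ A := by
  rintro y ⟨x, hx, h⟩
  induction h with
  | refl => exact hX hx
  | tail _ hbc ih =>
    by_contra hc
    exact Set.disjoint_left.1 hA ⟨hc, _, ih, hbc.1⟩ hbc.2.2

lemma disjoint_setNbhd_reachIn : Disjoint (setNbhd G (reachIn G R X)) R :=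
  Set.disjoint_left.2 fun _ ⟨hb, _, ha, hab⟩ hbR => hb (mem_reachIn_of_adj ha hab hbR)

lemma setNbhd_reachIn_subset : setNbhd G (reachIn G R X) ⊆ setNbhd G R :=
  fun _ hb => ⟨Set.disjoint_left.1 disjoint_setNbhd_reachIn hb,
    hb.2.imp fun _ ⟨ha, hab⟩ => ⟨reachIn_subset ha, hab⟩⟩

lemma reachIn_reachIn : reachIn G (reachIn G R X) X = reachIn G R X := by
  refine (reachIn_subset).antisymm ?_
  rintro y ⟨x, hx, h⟩
  induction h with
  | refl => exact inter_subset_reachIn ⟨hx.1, inter_subset_reachIn hx⟩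
  | @tail _ c hb hbc ih => exact mem_reachIn_of_adj ih hbc.1 ⟨x, hx, hb.tail hbc⟩

lemma notMem_reachIn (hv : v ∉ X) (hadj : ∀ u, ¬ G.Adj u v) : v ∉ reachIn G R X := by
  rintro ⟨x, hx, h⟩
  rcases h.cases_tail with rfl | ⟨u, -, huv, -⟩
  exacts [hv hx.1, hadj u huv]

lemma induce_reachable_iff {x y : R} :
    (G.induce R).Reachable x y ↔ ReflTransGen (fun a b => G.Adj a b ∧ a ∈ R ∧ b ∈ R) x y := by
  refine ⟨fun h => ((reachable_iff_reflTransGen _ _).1 h).lift Subtype.val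
    fun a b hab => ⟨hab, a.2, b.2⟩, fun h => ?_⟩
  obtain ⟨y, hy⟩ := y
  change ReflTransGen _ (x : V) y at h
  induction h with
  | refl => exact Reachable.refl _
  | tail _ hbc ih => exact (ih hbc.2.1).trans (Adj.reachable (G := G.induce R) hbc.1)

lemma reachSet_eq_reachIn (G : SimpleGraph V) (W X : Set V) :
    reachSet G W X = reachIn G Wᶜ X := by
  ext y
  constructor
  · rintro ⟨x, hx, _, _, h⟩
    exact ⟨x, hx, induce_reachable_iff.1 h⟩
  · rintro ⟨x, hx, h⟩
    exact ⟨x, hx, hx.2, reachIn_subset ⟨x, hx, h⟩, induce_reachable_iff.2 h⟩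

lemma reachSet_setNbhd (hX : X ⊆ R) (hR : R ⊆ reachIn G R X) :
    reachSet G (setNbhd G R) X = R := by
  rw [reachSet_eq_reachIn]
  exact (reachIn_subset_of_disjoint_setNbhd (Set.inter_subset_left.trans hX)
    disjoint_compl_right).antisymm (hR.trans (reachIn_mono (fun _ hr hN => hN.1 hr) le_rfl))

lemma subset_reachIn_of_induce_connected (h : (G.induce R).Connected) (hv : v ∈ R) :
    R ⊆ reachIn G R {v} :=
  fun u hu => ⟨v, ⟨rfl, hv⟩, induce_reachable_iff.1 (h.preconnected ⟨v, hv⟩ ⟨u, hu⟩)⟩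

lemma subset_of_disjoint_setNbhd (h : (G.induce R').Connected) (hRR' : (R ∩ R').Nonempty)
    (hN : Disjoint (setNbhd G R) R') : R' ⊆ R := by
  obtain ⟨w, hwR, hwR'⟩ := hRR'
  exact (subset_reachIn_of_induce_connected h hwR').trans
    (reachIn_subset_of_disjoint_setNbhd
      (Set.inter_subset_left.trans (Set.singleton_subset_iff.2 hwR)) hN)

lemma nonempty_setNbhd_inter_of_touches (h : (G.induce R').Connected) (hT : Touches G R R')
    (hR' : ¬ R' ⊆ R) : (setNbhd G R ∩ R').Nonempty := by
  rw [← Set.not_disjoint_iff_nonempty_inter]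
  refine fun hN => hR' (subset_of_disjoint_setNbhd h ?_ hN)
  rcases hT with hRR' | ⟨u, hu, w, hw, huw⟩
  · exact hRR'
  · by_cases hwR : w ∈ R
    · exact ⟨w, hwR, hw⟩
    · exact absurd hw (Set.disjoint_left.1 hN ⟨hwR, u, hu, huw⟩)

end Reach

section Boundary

variable {G : SimpleGraph V} {R : Set V} {v : V}

lemma ncard_setNbhd_union_add_ncard_setNbhd_inter_le [Finite V] (G : SimpleGraph V)
    (A B : Set V) :
    (setNbhd G (A ∪ B)).ncard + (setNbhd G (A ∩ B)).ncard
      ≤ (setNbhd G A).ncard + (setNbhd G B).ncard := by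
  rw [← Set.ncard_union_add_ncard_inter (setNbhd G A),
    ← Set.ncard_union_add_ncard_inter (setNbhd G (A ∪ B))]
  refine add_le_add (Set.ncard_le_ncard ?_) (Set.ncard_le_ncard ?_)
  · rintro w (⟨hw, u, hu | hu, huw⟩ | ⟨hw, u, hu, huw⟩)
    · exact Or.inl ⟨fun h => hw (Or.inl h), u, hu, huw⟩
    · exact Or.inr ⟨fun h => hw (Or.inr h), u, hu, huw⟩
    · by_cases hwA : w ∈ A
      · exact Or.inr ⟨fun hwB => hw ⟨hwA, hwB⟩, u, hu.2, huw⟩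
      · exact Or.inl ⟨hwA, u, hu.1, huw⟩
  · rintro w ⟨⟨hw, -⟩, -, u, hu, huw⟩
    exact ⟨⟨fun h => hw (Or.inl h), u, hu.1, huw⟩, ⟨fun h => hw (Or.inr h), u, hu.2, huw⟩⟩

lemma setNbhd_deleteIncidenceSet (hv : v ∉ R) :
    setNbhd (G.deleteIncidenceSet v) R = setNbhd G R \ {v} := by
  ext u
  simp only [setNbhd, deleteIncidenceSet_adj, Set.mem_sdiff, Set.mem_ofPred_eq,
    Set.mem_singleton_iff]
  constructor
  · rintro ⟨hu, w, hw, hwu, -, huv⟩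
    exact ⟨⟨hu, w, hw, hwu⟩, huv⟩
  · rintro ⟨⟨hu, w, hw, hwu⟩, huv⟩
    exact ⟨hu, w, hw, hwu, fun h => hv (h ▸ hw), huv⟩

lemma reachIn_deleteIncidenceSet (hv : v ∉ R) (X : Set V) :
    reachIn (G.deleteIncidenceSet v) R X = reachIn G R X :=
  reachIn_congr fun a ha b hb => by
    rw [deleteIncidenceSet_adj]
    exact ⟨fun h => h.1, fun h => ⟨h, fun h' => hv (h' ▸ ha), fun h' => hv (h' ▸ hb)⟩⟩

lemma notMem_reachIn_deleteIncidenceSet {X : Set V} (hv : v ∉ X) :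
    v ∉ reachIn (G.deleteIncidenceSet v) R X :=
  notMem_reachIn hv fun _ h => (deleteIncidenceSet_adj.1 h).2.2 rfl

end Boundary

section ImportantSets

variable {G : SimpleGraph V} {X X' Y R R₀ : Set V} {p : ℕ} {v : V}

/-- `R` plays the role of `R_{G-W}(X)` for an important `X–Y` separator `W = N(R)` of size at
most `p`. -/
structure IsImportantSet (G : SimpleGraph V) (X Y : Set V) (p : ℕ) (R : Set V) : Prop where
  subset : X ⊆ R
  disjoint : Disjoint R Y
  ncard_le : (setNbhd G R).ncard ≤ p
  subset_reachIn : R ⊆ reachIn G R X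
  ncard_lt : ∀ R', R ⊂ R' → Disjoint R' Y → R' ⊆ reachIn G R' R →
    (setNbhd G R).ncard < (setNbhd G R').ncard

lemma IsImportantSet.mono_source (h : IsImportantSet G X Y p R) (hX : X ⊆ X') (hX' : X' ⊆ R) :
    IsImportantSet G X' Y p R :=
  { h with
    subset := hX'
    subset_reachIn := h.subset_reachIn.trans (reachIn_mono le_rfl hX) }

lemma IsImportantSet.deleteIncidenceSet [Finite V] (h : IsImportantSet G X Y p R)
    (hv : v ∈ setNbhd G R) : IsImportantSet (G.deleteIncidenceSet v) X Y (p - 1) R where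
  subset := h.subset
  disjoint := h.disjoint
  ncard_le := by
    rw [setNbhd_deleteIncidenceSet hv.1, Set.ncard_sdiff_singleton_of_mem hv]
    exact Nat.sub_le_sub_right h.ncard_le 1
  subset_reachIn := by
    rw [reachIn_deleteIncidenceSet hv.1]
    exact h.subset_reachIn
  ncard_lt R' hRR' hR'Y hR' := by
    have hvR' : v ∉ R' := fun hvR' =>
      notMem_reachIn_deleteIncidenceSet (R := R') hv.1 (hR' hvR')
    rw [reachIn_deleteIncidenceSet hvR'] at hR'
    have hlt := h.ncard_lt R' hRR' hR'Y hR'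
    rw [setNbhd_deleteIncidenceSet hv.1, setNbhd_deleteIncidenceSet hvR',
      Set.ncard_sdiff_singleton_of_mem hv]
    have hpos := (Set.ncard_pos (Set.toFinite _)).2 ⟨v, hv⟩
    have hdiff := Set.ncard_le_ncard_sdiff_add_ncard (setNbhd G R') {v}
    rw [Set.ncard_singleton] at hdiff
    omega

structure IsFurthestMinCut (G : SimpleGraph V) (X Y R₀ : Set V) : Prop where
  subset : X ⊆ R₀
  disjoint : Disjoint R₀ Y
  subset_reachIn : R₀ ⊆ reachIn G R₀ X
  ncard_le : ∀ R, X ⊆ R → Disjoint R Y → (setNbhd G R₀).ncard ≤ (setNbhd G R).ncard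
  subset_of_ncard_le : ∀ R, X ⊆ R → Disjoint R Y → R ⊆ reachIn G R X →
    (setNbhd G R).ncard ≤ (setNbhd G R₀).ncard → R ⊆ R₀

variable [Finite V]

lemma exists_isFurthestMinCut (G : SimpleGraph V) (hXY : Disjoint X Y) :
    ∃ R₀, IsFurthestMinCut G X Y R₀ := by
  let M := {R | X ⊆ R ∧ Disjoint R Y ∧ R ⊆ reachIn G R X}
  obtain ⟨R₁, hR₁, hmin⟩ := Set.exists_min_image M (fun R => (setNbhd G R).ncard)
    (Set.toFinite M) ⟨X, le_rfl, hXY, subset_reachIn le_rfl⟩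
  -- Replacing `R` by `reachIn G R X` only shrinks the boundary.
  have hle : ∀ R, X ⊆ R → Disjoint R Y → (setNbhd G R₁).ncard ≤ (setNbhd G R).ncard :=
    fun R hX hY => (hmin _ ⟨subset_reachIn hX, hY.mono_left reachIn_subset,
      reachIn_reachIn.symm.subset⟩).trans (Set.ncard_le_ncard setNbhd_reachIn_subset)
  obtain ⟨R₀, ⟨⟨hX₀, hY₀, hc₀⟩, hR₀⟩, hmax⟩ := Set.exists_max_image
    {R ∈ M | (setNbhd G R).ncard ≤ (setNbhd G R₁).ncard} Set.ncard (Set.toFinite _)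
    ⟨R₁, hR₁, le_rfl⟩
  refine ⟨R₀, hX₀, hY₀, hc₀, fun R hX hY => hR₀.trans (hle R hX hY),
    fun R hX hY hc hR => ?_⟩
  have hsub := ncard_setNbhd_union_add_ncard_setNbhd_inter_le G R₀ R
  have hinter := hle (R₀ ∩ R) (Set.subset_inter hX₀ hX) (hY₀.mono_left Set.inter_subset_left)
  have hunion : R₀ ∪ R ⊆ reachIn G (R₀ ∪ R) X := Set.union_subset
    (hc₀.trans (reachIn_mono Set.subset_union_left le_rfl))
    (hc.trans (reachIn_mono Set.subset_union_right le_rfl))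
  have heq := Set.eq_of_subset_of_ncard_le Set.subset_union_left
    (hmax _ ⟨⟨hX₀.trans Set.subset_union_left, hY₀.union_left hY, hunion⟩, by omega⟩)
  exact Set.union_eq_left.1 heq.symm

lemma IsFurthestMinCut.subset_of_isImportantSet (h₀ : IsFurthestMinCut G X Y R₀)
    (hR : IsImportantSet G X Y p R) : R₀ ⊆ R := by
  by_contra hR₀
  have hsub := ncard_setNbhd_union_add_ncard_setNbhd_inter_le G R R₀
  have hinter := h₀.ncard_le (R ∩ R₀) (Set.subset_inter hR.subset h₀.subset)
    (h₀.disjoint.mono_left Set.inter_subset_right)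
  have hlt := hR.ncard_lt (R ∪ R₀) (Set.ssubset_union_left_iff.2 hR₀)
    (hR.disjoint.union_left h₀.disjoint) (Set.union_subset
      (inter_subset_reachIn.trans' fun r hr => ⟨hr, Or.inl hr⟩)
      (h₀.subset_reachIn.trans (reachIn_mono Set.subset_union_right hR.subset)))
  omega

lemma IsFurthestMinCut.eq_of_setNbhd_eq_empty (h₀ : IsFurthestMinCut G X Y R₀)
    (hN : setNbhd G R₀ = ∅) (hR : IsImportantSet G X Y p R) : R = R₀ :=
  (hR.subset_reachIn.trans (reachIn_subset_of_disjoint_setNbhd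
    (Set.inter_subset_left.trans h₀.subset) (by simp [hN]))).antisymm
    (h₀.subset_of_isImportantSet hR)

lemma IsFurthestMinCut.ncard_lt (h₀ : IsFurthestMinCut G X Y R₀) (hv : v ∈ setNbhd G R₀)
    (hR : insert v R₀ ⊆ R) (hRY : Disjoint R Y) :
    (setNbhd G R₀).ncard < (setNbhd G R).ncard := by
  have hR₀ : R₀ ⊆ reachIn G R X :=
    h₀.subset_reachIn.trans (reachIn_mono ((Set.subset_insert v R₀).trans hR) le_rfl)
  obtain ⟨hvR₀, u, hu, huv⟩ := hv
  have hvR : v ∈ reachIn G R X := mem_reachIn_of_adj (hR₀ hu) huv (hR (Set.mem_insert v R₀))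
  refine lt_of_lt_of_le ?_ (Set.ncard_le_ncard (setNbhd_reachIn_subset (X := X)))
  by_contra! hle
  exact hvR₀ (h₀.subset_of_ncard_le _ (h₀.subset.trans hR₀) (hRY.mono_left reachIn_subset)
    reachIn_reachIn.symm.subset hle hvR)

lemma IsFurthestMinCut.setOf_isImportantSet_subset (h₀ : IsFurthestMinCut G X Y R₀)
    (hv : v ∈ setNbhd G R₀) :
    {R | IsImportantSet G X Y p R} ⊆
      {R | IsImportantSet (G.deleteIncidenceSet v) X Y (p - 1) R} ∪
        {R | IsImportantSet G (insert v R₀) Y p R} := by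
  intro R hR
  have hR₀ := h₀.subset_of_isImportantSet hR
  by_cases hvR : v ∈ R
  · exact Or.inr (hR.mono_source (h₀.subset.trans (Set.subset_insert v R₀))
      (Set.insert_subset hvR hR₀))
  · obtain ⟨-, u, hu, huv⟩ := hv
    exact Or.inl (hR.deleteIncidenceSet ⟨hvR, u, hR₀ hu, huv⟩)

lemma exists_ncard_setNbhd_le_deleteIncidenceSet (hv : v ∉ X) (hX : X ⊆ R)
    (hRY : Disjoint R Y) : ∃ R', X ⊆ R' ∧ Disjoint R' Y ∧
      (setNbhd G R').ncard ≤ (setNbhd (G.deleteIncidenceSet v) R).ncard + 1 := by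
  refine ⟨reachIn (G.deleteIncidenceSet v) R X, subset_reachIn hX,
    hRY.mono_left reachIn_subset, ?_⟩
  have hN := setNbhd_deleteIncidenceSet (G := G)
    (notMem_reachIn_deleteIncidenceSet (G := G) (R := R) hv)
  have hsub : setNbhd G (reachIn (G.deleteIncidenceSet v) R X) ⊆
      insert v (setNbhd (G.deleteIncidenceSet v) R) :=
    Set.sdiff_singleton_subset_iff.1 (hN ▸ setNbhd_reachIn_subset)
  exact (Set.ncard_le_ncard hsub).trans (Set.ncard_insert_le _ _)

theorem ncard_setOf_isImportantSet_le (μ : ℕ) : ∀ (G : SimpleGraph V) (X Y : Set V) (p : ℕ),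
    (∀ R, X ⊆ R → Disjoint R Y → 2 * p ≤ μ + (setNbhd G R).ncard) →
      {R | IsImportantSet G X Y p R}.ncard ≤ 2 ^ μ := by
  induction μ using Nat.strong_induction_on with
  | _ μ ih =>
  intro G X Y p hμ
  by_cases hXY : Disjoint X Y
  swap
  · have : {R | IsImportantSet G X Y p R} = ∅ := Set.eq_empty_of_forall_notMem fun R hR =>
      hXY (hR.disjoint.mono_left hR.subset)
    simp [this]
  obtain ⟨R₀, h₀⟩ := exists_isFurthestMinCut G hXY
  rcases (setNbhd G R₀).eq_empty_or_nonempty with hN | ⟨v, hv⟩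
  · calc _ ≤ ({R₀} : Set (Set V)).ncard :=
          Set.ncard_le_ncard fun R hR => h₀.eq_of_setNbhd_eq_empty hN hR
      _ ≤ 2 ^ μ := by simpa using Nat.one_le_two_pow
  by_cases hp : p < (setNbhd G R₀).ncard
  · have : {R | IsImportantSet G X Y p R} = ∅ := Set.eq_empty_of_forall_notMem fun R hR =>
      (h₀.ncard_le R hR.subset hR.disjoint).not_gt (hR.ncard_le.trans_lt hp)
    simp [this]
  have hμ₀ := hμ R₀ h₀.subset h₀.disjoint
  have hpos : 0 < (setNbhd G R₀).ncard := (Set.ncard_pos (Set.toFinite _)).2 ⟨v, hv⟩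
  have hvX : v ∉ X := fun h => hv.1 (h₀.subset h)
  calc _ ≤ ({R | IsImportantSet (G.deleteIncidenceSet v) X Y (p - 1) R} ∪
          {R | IsImportantSet G (insert v R₀) Y p R}).ncard :=
        Set.ncard_le_ncard (h₀.setOf_isImportantSet_subset hv)
    _ ≤ 2 ^ (μ - 1) + 2 ^ (μ - 1) := by
        refine (Set.ncard_union_le _ _).trans (add_le_add (ih (μ - 1) (by omega) _ _ _ _ ?_)
          (ih (μ - 1) (by omega) _ _ _ _ fun R hR hRY => ?_))
        · intro R hX hRY
          obtain ⟨R', hX', hR'Y, hle⟩ :=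
            exists_ncard_setNbhd_le_deleteIncidenceSet (G := G) hvX hX hRY
          have := hμ R' hX' hR'Y
          omega
        · have := h₀.ncard_lt hv hR hRY
          omega
    _ = 2 ^ μ := by rw [← two_mul, ← pow_succ']; congr 1; omega

lemma ncard_setOf_isImportantSet_le_four_pow (G : SimpleGraph V) (X Y : Set V) (p : ℕ) :
    {R | IsImportantSet G X Y p R}.ncard ≤ 4 ^ p := by
  have h := ncard_setOf_isImportantSet_le (2 * p) G X Y p fun _ _ _ => Nat.le_add_right _ _
  rwa [pow_mul, show 2 ^ 2 = 4 from rfl] at h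

end ImportantSets

lemma IsChip.isImportantSet {G : SimpleGraph V} {k : ℕ} {S C : Set V} {v : V}
    (hC : IsChip G k S C) (hv : v ∈ C) : IsImportantSet G {v} S (3 * k) C := by
  obtain ⟨hconn, hcard, hsep, -, himp⟩ := hC
  have hreach : reachSet G (setNbhd G C) C = C := reachSet_setNbhd le_rfl (subset_reachIn le_rfl)
  refine ⟨Set.singleton_subset_iff.2 hv, Set.disjoint_left.2 fun x hxC hxS => ?_, hcard,
    subset_reachIn_of_induce_connected hconn hv, fun R hCR hRS hR => ?_⟩
  · have hxN : x ∉ setNbhd G C := fun h => h.1 hxC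
    exact hsep x ⟨hxC, hxN⟩ x ⟨hxS, hxN⟩ ⟨hxN, hxN, Reachable.refl _⟩
  · by_contra! hle
    have hR' : reachSet G (setNbhd G R) C = R := reachSet_setNbhd hCR.subset hR
    refine himp (setNbhd G R) (fun x hx y hy hxy => ?_) hle (by rwa [hreach, hR'])
    have hyR : y ∈ reachSet G (setNbhd G R) C := ⟨x, hx, hxy⟩
    rw [hR'] at hyR
    exact Set.disjoint_left.1 hRS hyR hy.1

lemma ncard_setOf_isChip_mem_le [Finite V] (G : SimpleGraph V) (k : ℕ) (S : Set V) (v : V) :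
    {C | IsChip G k S C ∧ v ∈ C}.ncard ≤ 4 ^ (3 * k) :=
  (Set.ncard_le_ncard fun _ hC => hC.1.isImportantSet hC.2).trans
    (ncard_setOf_isImportantSet_le_four_pow G {v} S (3 * k))

theorem touches_bound_general {V : Type*} [Fintype V]
    (G : SimpleGraph V) (k : ℕ) (S : Set V) (C : Set V)
    (hC : C ∈ maximalChips G k S) :
    {C' | C' ∈ maximalChips G k S ∧ C' ≠ C ∧ Touches G C C'}.ncard
      ≤ 3 * k * 4 ^ (3 * k) := by
  classical
  have hcover : {C' | C' ∈ maximalChips G k S ∧ C' ≠ C ∧ Touches G C C'} ⊆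
      ⋃ v ∈ (setNbhd G C).toFinset, {C' | IsChip G k S C' ∧ v ∈ C'} := by
    rintro C' ⟨hC', hne, hT⟩
    obtain ⟨v, hvC, hvC'⟩ := nonempty_setNbhd_inter_of_touches hC'.1.1 hT
      fun h => hne (hC'.2 C hC.1 h).symm
    exact Set.mem_biUnion (Set.mem_toFinset.2 hvC) ⟨hC'.1, hvC'⟩
  calc _ ≤ _ := Set.ncard_le_ncard hcover
    _ ≤ ∑ v ∈ (setNbhd G C).toFinset, {C' | IsChip G k S C' ∧ v ∈ C'}.ncard :=
        Finset.set_ncard_biUnion_le _ _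
    _ ≤ ∑ _v ∈ (setNbhd G C).toFinset, 4 ^ (3 * k) :=
        Finset.sum_le_sum fun v _ => ncard_setOf_isChip_mem_le G k S v
    _ = (setNbhd G C).ncard * 4 ^ (3 * k) := by
        rw [Finset.sum_const, smul_eq_mul, Set.ncard_eq_toFinset_card']
    _ ≤ 3 * k * 4 ^ (3 * k) := Nat.mul_le_mul_right _ hC.1.2.1

/-- a chip touches at most `3k·4^{3k}` other maximal chips
(Lemma 3.6). -/
theorem touches_bound {V : Type*} [Fintype V] [DecidableEq V]
    (G : SimpleGraph V) (k : ℕ) (hk : 0 < k) (S : Set V) (C : Set V)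
    (hC : C ∈ maximalChips G k S) :
    {C' | C' ∈ maximalChips G k S ∧ C' ≠ C ∧ Touches G C C'}.ncard
      ≤ 3 * k * 4 ^ (3 * k) :=
  touches_bound_general G k S C hC
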